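/- The language L = Σ*abΣ* over Σ = {a,b} has exactly 281 minimal atomic NFAs: its atoms are A = Σ*abΣ*, B = b*ba*, C = a*, every atomic NFA of L has at least 3 states, and there are exactly 281 NFAs with 3 states, represented as in the Legality characterization by a collection 𝒞 of three distinct non-empty sets of atoms of L together with a transition function β, an initial collection 𝒞_I and a final collection 𝒞_F satisfying conditions (1) S(𝒞_I) = {A} (the set of initial atoms), (2) S(β(B_i,a)) = α(B_i,a) for every state B_i and letter a, and (3) B_i ∈ 𝒞_F iff C ∈ B_i, each of which is a reduced atomic NFA accepting L. -/

import Mathlib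

/-! Basic definitions: left quotients, atoms, and operations on finite automata. -/

/-- The left quotient of a language `L` by a word `w`: `w⁻¹L = {x | w ++ x ∈ L}`. -/
def leftQuot {α : Type} (L : Language α) (w : List α) : Language α := {x | w ++ x ∈ L}

/-- The set of all left quotients of `L`. -/
def quots {α : Type} (L : Language α) : Set (Language α) := {K | ∃ w : List α, K = leftQuot L w}

/-- `A` is an atom of `L`: a non-empty intersection `K̃_0 ∩ ⋯ ∩ K̃_{n−1}` where each `K̃_i` is a
quotient `K_i` of `L` or its complement (`S` is the set of uncomplemented quotients, so a word is
in the intersection iff it belongs exactly to the quotients in `S`). -/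
def IsAtomOf {α : Type} (L A : Language α) : Prop :=
  (∃ x, x ∈ A) ∧ ∃ S : Set (Language α), S ⊆ quots L ∧
    A = {x | ∀ K ∈ quots L, (x ∈ K ↔ K ∈ S)}

/-- A positive atom: at least one term of its defining intersection is uncomplemented,
equivalently the atom is contained in some quotient of `L`. -/
def IsPositiveAtomOf {α : Type} (L A : Language α) : Prop :=
  IsAtomOf L A ∧ ∃ K ∈ quots L, ∀ x ∈ A, x ∈ K

namespace NFA

/-- The right language of a state `q`: words accepted starting from `q`. -/
def rightLang {α σ : Type} (M : NFA α σ) (q : σ) : Language α :=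
  {w | ∃ p ∈ M.accept, p ∈ M.evalFrom {q} w}

/-- The left language of a state `q`: words leading from the initial states to `q`. -/
def leftLang {α σ : Type} (M : NFA α σ) (q : σ) : Language α :=
  {w | q ∈ M.eval w}

/-- An NFA is trim if every state has a non-empty left language and right language. -/
def IsTrim {α σ : Type} (M : NFA α σ) : Prop :=
  ∀ q, (∃ w, w ∈ M.leftLang q) ∧ (∃ w, w ∈ M.rightLang q)

/-- An NFA is reduced if distinct states have distinct right languages. -/
def IsReduced {α σ : Type} (M : NFA α σ) : Prop :=
  ∀ q p, M.rightLang q = M.rightLang p → q = p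

/-- An NFA is atomic if the right language of every state is a union of positive atoms of the
accepted language. -/
def IsAtomic {α σ : Type} (M : NFA α σ) : Prop :=
  ∀ q, ∃ 𝒜 : Set (Language α), (∀ A ∈ 𝒜, IsPositiveAtomOf M.accepts A) ∧
    M.rightLang q = {w | ∃ A ∈ 𝒜, w ∈ A}

/-- Reversal of an NFA: interchange initial and final states and reverse all transitions. -/
def rev {α σ : Type} (M : NFA α σ) : NFA α σ :=
  ⟨fun q a => {p | q ∈ M.step p a}, M.accept, M.start⟩

/-- States of the determinization of an NFA: the subsets of states reachable from the initial
subset. -/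
def detStates {α σ : Type} (M : NFA α σ) : Type := {S : Set σ // ∃ w, M.eval w = S}

instance {α σ : Type} [Finite σ] (M : NFA α σ) : Finite M.detStates :=
  Subtype.finite

/-- Determinization of an NFA by the subset construction, keeping only the subsets reachable
from the initial subset. -/
def det {α σ : Type} (M : NFA α σ) : DFA α M.detStates where
  step S a := ⟨M.stepSet S.1 a, by
    obtain ⟨w, hw⟩ := S.2
    exact ⟨w ++ [a], by rw [NFA.eval_append_singleton, hw]⟩⟩
  start := ⟨M.start, [], rfl⟩
  accept := {S | ∃ p ∈ M.accept, p ∈ S.1}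

end NFA

/-- Reversal of a DFA, yielding an NFA. -/
def DFA.rev {α σ : Type} (M : DFA α σ) : NFA α σ :=
  ⟨fun q a => {p | M.step p a = q}, M.accept, {M.start}⟩

/-- A DFA is minimal if no DFA accepting the same language has fewer states. -/
def DFA.IsMinimal {α σ : Type} (M : DFA α σ) : Prop :=
  ∀ (σ' : Type) (_ : Finite σ') (M' : DFA α σ'), M'.accepts = M.accepts →
    Nat.card σ ≤ Nat.card σ'

/-- The atom `A = Σ*abΣ*` of `Σ*abΣ*` (with `a = 0`, `b = 1`). -/
def LA : Language (Fin 2) := {w | [0, 1] <:+: w}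

/-- The atom `B = b*ba*`. -/
def LB : Language (Fin 2) := {w | ∃ m n : ℕ, w = List.replicate (m + 1) 1 ++ List.replicate n 0}

/-- The atom `C = a*` (the final atom). -/
def LC : Language (Fin 2) := {w | ∃ n : ℕ, w = List.replicate n 0}

/-- The set of atoms of `Σ*abΣ*`. -/
def atomSet3 : Set (Language (Fin 2)) := {LA, LB, LC}

/-- The átomaton transition relation `α` on the atoms: `Y ∈ alphaStep X x` iff `Y` is an atom
with `x·Y ⊆ X`. -/
def alphaStep (X : Language (Fin 2)) (x : Fin 2) : Set (Language (Fin 2)) :=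
  {Y | Y ∈ atomSet3 ∧ ∀ w ∈ Y, x :: w ∈ X}

/-- `alphaStep` extended to sets of atoms. -/
def alphaStepSet (S : Set (Language (Fin 2))) (x : Fin 2) : Set (Language (Fin 2)) :=
  ⋃ X ∈ S, alphaStep X x

/-- A 3-state NFA for `Σ*abΣ*` as in the Legality characterization: a collection `states` of
three distinct non-empty sets of atoms, a transition function `step` (defined on the states and
trivial elsewhere), an initial collection `start` and a final collection `accept`, satisfying
(1) the union of the initial collection is `{A}`, the set of initial atoms; (2)
`S(β(B_i, x)) = α(B_i, x)` for every state `B_i` and letter `x`; (3) a state is final iff it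
contains the final atom `C`. -/
structure Legal3NFA where
  states : Set (Set (Language (Fin 2)))
  step : Set (Language (Fin 2)) → Fin 2 → Set (Set (Language (Fin 2)))
  start : Set (Set (Language (Fin 2)))
  accept : Set (Set (Language (Fin 2)))
  card_states : states.ncard = 3
  states_atoms : ∀ S ∈ states, S.Nonempty ∧ S ⊆ atomSet3
  step_mem : ∀ S x, step S x ⊆ states
  step_out : ∀ S ∉ states, ∀ x, step S x = ∅
  start_sub : start ⊆ states
  accept_sub : accept ⊆ states
  cond_init : (⋃ S ∈ start, S) = {LA}
  cond_step : ∀ S ∈ states, ∀ x, (⋃ T ∈ step S x, T) = alphaStepSet S x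
  cond_fin : ∀ S ∈ states, (S ∈ accept ↔ LC ∈ S)

/-- The NFA determined by a `Legal3NFA`. -/
def Legal3NFA.toNFA (N : Legal3NFA) : NFA (Fin 2) {S // S ∈ N.states} where
  step S x := {T | T.1 ∈ N.step S.1 x}
  start := {S | S.1 ∈ N.start}
  accept := {S | S.1 ∈ N.accept}

/-! The three languages satisfy the equations of the átomaton: `a·w ∈ A ↔ w ∈ A ∪ B`,
`b·w ∈ A ↔ w ∈ A`, `b·w ∈ B ↔ w ∈ B ∪ C`, `a·w ∈ C ↔ w ∈ C`, no other `x·w` lies in `B` or `C`,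
and `ε` lies only in `C`. They cover `Σ*`, and since the reversed átomaton is deterministic they are
pairwise disjoint. Hence every quotient of `L` is a union of them (`A`, `A ∪ B` and `Σ*`), two words
lie in the same quotients iff they lie in the same one of `A`, `B`, `C`, and these are the atoms.

In a legal NFA, condition (2) makes the right language of a state the union of its atoms, which
gives acceptance, reducedness and atomicity. The lower bound holds for every NFA of `L`: along an
accepting run of `ab` the right languages of the three states lie in `L`, `a⁻¹L` and contain `b`,
`ε`, `ε` respectively, so the states are distinct. Finally a legal NFA is determined by its states
and transitions; written as index sets of atoms these range over a finite type with 281 elements. -/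

lemma Language.mem_sSup {α : Type} {S : Set (Language α)} {w : List α} :
    w ∈ sSup S ↔ ∃ X ∈ S, w ∈ X := Iff.rfl

lemma mem_leftQuot {α : Type} {L : Language α} {w v : List α} :
    v ∈ leftQuot L w ↔ w ++ v ∈ L := Iff.rfl

lemma leftQuot_cons {α : Type} (L : Language α) (x : α) (w : List α) :
    leftQuot L (x :: w) = leftQuot (leftQuot L [x]) w := rfl

def atomOf {α : Type} (L : Language α) (v : List α) : Language α :=
  {w | ∀ K ∈ quots L, (w ∈ K ↔ v ∈ K)}

lemma isAtomOf_iff_exists_eq_atomOf {α : Type} (L X : Language α) :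
    IsAtomOf L X ↔ ∃ v, X = atomOf L v := by
  constructor
  · rintro ⟨⟨v, hv⟩, S, -, rfl⟩
    refine ⟨v, Set.ext fun w => forall₂_congr fun K hK => ?_⟩
    rw [hv K hK]
  · rintro ⟨v, rfl⟩
    refine ⟨⟨v, fun K _ => Iff.rfl⟩, {K ∈ quots L | v ∈ K}, Set.sep_subset _ _, ?_⟩
    exact Set.ext fun w => forall₂_congr fun K hK => by simp [hK]

namespace NFA

variable {α σ : Type} (M : NFA α σ)

lemma mem_acceptsFrom_iff_exists_rightLang {S : Set σ} {w : List α} :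
    w ∈ M.acceptsFrom S ↔ ∃ q ∈ S, w ∈ M.rightLang q := by
  constructor
  · rintro ⟨p, hp, hw⟩
    obtain ⟨q, hq, hw⟩ := mem_evalFrom_iff_exists.1 hw
    exact ⟨q, hq, p, hp, hw⟩
  · rintro ⟨q, hq, p, hp, hw⟩
    exact ⟨p, hp, mem_evalFrom_iff_exists.2 ⟨q, hq, hw⟩⟩

lemma mem_accepts_iff_exists_rightLang {w : List α} :
    w ∈ M.accepts ↔ ∃ q ∈ M.start, w ∈ M.rightLang q :=
  M.mem_acceptsFrom_iff_exists_rightLang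

lemma nil_mem_rightLang {q : σ} : [] ∈ M.rightLang q ↔ q ∈ M.accept := by
  change [] ∈ M.acceptsFrom {q} ↔ _
  simp

lemma cons_mem_rightLang {q : σ} {a : α} {w : List α} :
    a :: w ∈ M.rightLang q ↔ ∃ p ∈ M.step q a, w ∈ M.rightLang p := by
  rw [← mem_acceptsFrom_iff_exists_rightLang, ← stepSet_singleton, ← cons_mem_acceptsFrom]
  rfl

end NFA

lemma exists_finset_image_eq_of_subset_range {α β : Type*} [Finite α] {f : α → β} {s : Set β}
    (h : s ⊆ Set.range f) : ∃ t : Finset α, f '' t = s := by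
  obtain ⟨t, rfl⟩ := Set.subset_range_iff_exists_image_eq.1 h
  exact ⟨t.toFinite.toFinset, by simp⟩

lemma cons_mem_LA {x : Fin 2} {w : List (Fin 2)} :
    x :: w ∈ LA ↔ (x = 0 ∧ w.head? = some 1) ∨ w ∈ LA := by
  change [0, 1] <:+: x :: w ↔ _ ∨ [0, 1] <:+: w
  simp only [List.infix_cons_iff, List.cons_prefix_cons, List.singleton_prefix_iff_head?_eq_some,
    eq_comm (a := x)]

lemma cons_mem_LB {x : Fin 2} {w : List (Fin 2)} : x :: w ∈ LB ↔ x = 1 ∧ (w ∈ LB ∨ w ∈ LC) := by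
  constructor
  · rintro ⟨m, n, h⟩
    rw [List.replicate_succ, List.cons_append, List.cons.injEq] at h
    refine ⟨h.1, ?_⟩
    cases m with
    | zero => exact Or.inr ⟨n, h.2⟩
    | succ m => exact Or.inl ⟨m, n, h.2⟩
  · rintro ⟨rfl, ⟨m, n, rfl⟩ | ⟨n, rfl⟩⟩
    · exact ⟨m + 1, n, rfl⟩
    · exact ⟨0, n, rfl⟩

lemma cons_mem_LC {x : Fin 2} {w : List (Fin 2)} : x :: w ∈ LC ↔ x = 0 ∧ w ∈ LC := by
  constructor
  · rintro ⟨_ | n, h⟩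
    · cases h
    · rw [List.replicate_succ, List.cons.injEq] at h
      exact ⟨h.1, n, h.2⟩
  · rintro ⟨rfl, n, rfl⟩
    exact ⟨n + 1, rfl⟩

lemma nil_notMem_LA : [] ∉ LA := fun h => by simpa using List.eq_nil_of_infix_nil h

lemma nil_notMem_LB : [] ∉ LB := by rintro ⟨m, n, h⟩; cases h

lemma nil_mem_LC : [] ∈ LC := ⟨0, rfl⟩

lemma ab_mem_LA : [0, 1] ∈ LA := List.infix_rfl

lemma head?_eq_one_of_mem_LB {w : List (Fin 2)} (h : w ∈ LB) : w.head? = some 1 := by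
  obtain ⟨m, n, rfl⟩ := h
  rfl

lemma mem_LA_or_mem_LB_or_mem_LC (w : List (Fin 2)) : w ∈ LA ∨ w ∈ LB ∨ w ∈ LC := by
  induction w with
  | nil => exact Or.inr (Or.inr nil_mem_LC)
  | cons x w ih =>
    rcases ih with h | h | h <;> fin_cases x <;>
      simp [cons_mem_LA, cons_mem_LB, cons_mem_LC, h, head?_eq_one_of_mem_LB]

lemma cons_zero_mem_LA {w : List (Fin 2)} : 0 :: w ∈ LA ↔ w ∈ LA ∨ w ∈ LB := by
  rw [cons_mem_LA]
  constructor
  · rintro (⟨-, h⟩ | h)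
    · obtain ⟨t, rfl⟩ := List.head?_eq_some_iff.1 h
      rcases mem_LA_or_mem_LB_or_mem_LC t with ht | ht | ht <;> simp [cons_mem_LA, cons_mem_LB, ht]
    · exact Or.inl h
  · rintro (h | h)
    · exact Or.inr h
    · exact Or.inl ⟨rfl, head?_eq_one_of_mem_LB h⟩

lemma cons_one_mem_LA {w : List (Fin 2)} : 1 :: w ∈ LA ↔ w ∈ LA := by simp [cons_mem_LA]

def atom : Fin 3 → Language (Fin 2) := ![LA, LB, LC]

def atomatonStep : Fin 3 → Fin 2 → Finset (Fin 3) := ![![{0, 1}, {0}], ![∅, {1, 2}], ![{2}, ∅]]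

lemma cons_mem_atom_iff (i : Fin 3) (x : Fin 2) (w : List (Fin 2)) :
    x :: w ∈ atom i ↔ ∃ j ∈ atomatonStep i x, w ∈ atom j := by
  fin_cases i <;> fin_cases x <;>
    simp [atom, atomatonStep, cons_zero_mem_LA, cons_one_mem_LA, cons_mem_LB, cons_mem_LC]

lemma nil_mem_atom_iff (i : Fin 3) : [] ∈ atom i ↔ i = 2 := by
  fin_cases i <;> simp [atom, nil_notMem_LA, nil_notMem_LB, nil_mem_LC]

lemma exists_mem_atom (w : List (Fin 2)) : ∃ i, w ∈ atom i := by
  rcases mem_LA_or_mem_LB_or_mem_LC w with h | h | h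
  exacts [⟨0, h⟩, ⟨1, h⟩, ⟨2, h⟩]

lemma eq_of_mem_atomatonStep {i j k : Fin 3} {x : Fin 2} (hi : k ∈ atomatonStep i x)
    (hj : k ∈ atomatonStep j x) : i = j := by
  revert i j k x; decide

lemma eq_of_mem_atom {w : List (Fin 2)} {i j : Fin 3} (hi : w ∈ atom i) (hj : w ∈ atom j) :
    i = j := by
  induction w generalizing i j with
  | nil => exact ((nil_mem_atom_iff i).1 hi).trans ((nil_mem_atom_iff j).1 hj).symm
  | cons x w ih =>
    obtain ⟨k, hik, hk⟩ := (cons_mem_atom_iff i x w).1 hi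
    obtain ⟨l, hjl, hl⟩ := (cons_mem_atom_iff j x w).1 hj
    obtain rfl := ih hk hl
    exact eq_of_mem_atomatonStep hik hjl

lemma atom_nonempty (i : Fin 3) : (atom i).Nonempty := by
  fin_cases i
  exacts [⟨[0, 1], ab_mem_LA⟩, ⟨[1], 0, 0, rfl⟩, ⟨[], nil_mem_LC⟩]

lemma atom_injective : Function.Injective atom := by
  intro i j h
  obtain ⟨w, hw⟩ := atom_nonempty i
  exact eq_of_mem_atom hw (h ▸ hw)

lemma range_atom : Set.range atom = atomSet3 := by
  ext X
  simp only [atom, atomSet3, Matrix.range_cons, Matrix.range_empty, Set.union_empty,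
    Set.union_singleton, Set.union_insert, Set.mem_insert_iff, Set.mem_singleton_iff]
  tauto

def atomatonStepSet (s : Finset (Fin 3)) (x : Fin 2) : Finset (Fin 3) :=
  s.biUnion (atomatonStep · x)

def atomUnion (s : Finset (Fin 3)) : Language (Fin 2) := {w | ∃ i ∈ s, w ∈ atom i}

lemma mem_atomUnion {s : Finset (Fin 3)} {w : List (Fin 2)} :
    w ∈ atomUnion s ↔ ∃ i ∈ s, w ∈ atom i := Iff.rfl

lemma mem_atomUnion_iff_of_mem_atom {s : Finset (Fin 3)} {w : List (Fin 2)} {i : Fin 3}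
    (hw : w ∈ atom i) : w ∈ atomUnion s ↔ i ∈ s :=
  ⟨fun ⟨_, hj, hwj⟩ => eq_of_mem_atom hw hwj ▸ hj, fun hi => ⟨i, hi, hw⟩⟩

lemma leftQuot_atomUnion (s : Finset (Fin 3)) (w : List (Fin 2)) :
    leftQuot (atomUnion s) w = atomUnion (w.foldl atomatonStepSet s) := by
  induction w generalizing s with
  | nil => rfl
  | cons x w ih =>
    rw [leftQuot_cons, List.foldl_cons, ← ih]
    congr 1
    ext v
    simp only [mem_leftQuot, mem_atomUnion, List.singleton_append, cons_mem_atom_iff,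
      atomatonStepSet, Finset.mem_biUnion]
    tauto

/-- The index sets of the quotients `K₀ = A`, `K₁ = A ∪ B`, `K₂ = A ∪ B ∪ C` of `L`. -/
def quotIdx : Finset (Finset (Fin 3)) := {{0}, {0, 1}, Finset.univ}

lemma LA_eq_atomUnion : LA = atomUnion {0} := by
  ext w
  simp [mem_atomUnion, atom]

lemma quots_LA : quots LA = atomUnion '' quotIdx := by
  have closed : ∀ s ∈ quotIdx, ∀ w : List (Fin 2), w.foldl atomatonStepSet s ∈ quotIdx := by
    have step : ∀ s ∈ quotIdx, ∀ x, atomatonStepSet s x ∈ quotIdx := by decide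
    intro s hs w
    induction w generalizing s with
    | nil => exact hs
    | cons x w ih => exact ih _ (step s hs x)
  have reached : ∀ s ∈ quotIdx, ∃ w ∈ [[], [0], [0, 1]], w.foldl atomatonStepSet {0} = s := by
    decide
  ext K
  simp only [quots, LA_eq_atomUnion, leftQuot_atomUnion, Set.mem_ofPred_eq, Set.mem_image,
    Finset.mem_coe]
  constructor
  · rintro ⟨w, rfl⟩
    exact ⟨_, closed _ (by decide) w, rfl⟩
  · rintro ⟨s, hs, rfl⟩
    obtain ⟨w, -, rfl⟩ := reached s hs
    exact ⟨w, rfl⟩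

lemma univ_mem_quots_LA : Set.univ ∈ quots LA := by
  rw [quots_LA]
  refine ⟨Finset.univ, by decide, Set.eq_univ_of_forall fun w => ?_⟩
  obtain ⟨i, hw⟩ := exists_mem_atom w
  exact ⟨i, Finset.mem_univ i, hw⟩

lemma atomOf_LA_eq_atom {v : List (Fin 2)} {j : Fin 3} (hv : v ∈ atom j) :
    atomOf LA v = atom j := by
  have separates : ∀ i j : Fin 3, (∀ s ∈ quotIdx, (i ∈ s ↔ j ∈ s)) ↔ i = j := by decide
  ext w
  obtain ⟨i, hw⟩ := exists_mem_atom w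
  change (∀ K ∈ quots LA, (w ∈ K ↔ v ∈ K)) ↔ _
  simp only [quots_LA, Set.forall_mem_image, Finset.mem_coe, mem_atomUnion_iff_of_mem_atom hw,
    mem_atomUnion_iff_of_mem_atom hv, separates]
  exact ⟨fun h => h ▸ hw, fun h => eq_of_mem_atom hw h⟩

theorem isAtomOf_LA_iff (X : Language (Fin 2)) : IsAtomOf LA X ↔ X ∈ atomSet3 := by
  rw [isAtomOf_iff_exists_eq_atomOf, ← range_atom]
  constructor
  · rintro ⟨v, rfl⟩
    obtain ⟨j, hv⟩ := exists_mem_atom v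
    exact ⟨j, (atomOf_LA_eq_atom hv).symm⟩
  · rintro ⟨j, rfl⟩
    obtain ⟨v, hv⟩ := atom_nonempty j
    exact ⟨v, (atomOf_LA_eq_atom hv).symm⟩

theorem three_le_card_of_accepts_eq_LA {σ : Type} [Finite σ] (M : NFA (Fin 2) σ)
    (hM : M.accepts = LA) : 3 ≤ Nat.card σ := by
  obtain ⟨q₀, hq₀, hab⟩ := M.mem_accepts_iff_exists_rightLang.1 (hM ▸ ab_mem_LA)
  obtain ⟨q₁, hq₁, hb⟩ := M.cons_mem_rightLang.1 hab
  obtain ⟨q₂, -, hε⟩ := M.cons_mem_rightLang.1 hb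
  have h₀ : ∀ w ∈ M.rightLang q₀, w ∈ LA := fun w hw =>
    hM ▸ M.mem_accepts_iff_exists_rightLang.2 ⟨q₀, hq₀, hw⟩
  have h₁ : ∀ w ∈ M.rightLang q₁, 0 :: w ∈ LA := fun w hw =>
    h₀ _ (M.cons_mem_rightLang.2 ⟨q₁, hq₁, hw⟩)
  have h₀₁ : q₀ ≠ q₁ := fun h => by simpa [cons_one_mem_LA, nil_notMem_LA] using h₀ [1] (h ▸ hb)
  have h₀₂ : q₀ ≠ q₂ := fun h => nil_notMem_LA (h₀ _ (h ▸ hε))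
  have h₁₂ : q₁ ≠ q₂ := fun h => by simpa [cons_mem_LA, nil_notMem_LA] using h₁ [] (h ▸ hε)
  calc 3 = ({q₀, q₁, q₂} : Set σ).ncard := (Set.ncard_eq_three.2 ⟨_, _, _, h₀₁, h₀₂, h₁₂, rfl⟩).symm
    _ ≤ Nat.card σ := Set.ncard_le_card _

lemma mem_atomSet3_iff {X : Language (Fin 2)} : X ∈ atomSet3 ↔ ∃ i, atom i = X := by
  rw [← range_atom, Set.mem_range]

lemma alphaStep_atom (i : Fin 3) (x : Fin 2) :
    alphaStep (atom i) x = atom '' atomatonStep i x := by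
  ext Y
  constructor
  · rintro ⟨hY, hxY⟩
    obtain ⟨j, rfl⟩ := mem_atomSet3_iff.1 hY
    obtain ⟨w, hw⟩ := atom_nonempty j
    obtain ⟨k, hk, hwk⟩ := (cons_mem_atom_iff i x w).1 (hxY w hw)
    exact ⟨j, eq_of_mem_atom hwk hw ▸ hk, rfl⟩
  · rintro ⟨j, hj, rfl⟩
    exact ⟨mem_atomSet3_iff.2 ⟨j, rfl⟩, fun w hw => (cons_mem_atom_iff i x w).2 ⟨j, hj, hw⟩⟩

section SetsOfAtoms

variable {S T : Set (Language (Fin 2))}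

lemma nil_mem_sSup_iff (hS : S ⊆ atomSet3) : [] ∈ sSup S ↔ LC ∈ S := by
  constructor
  · rintro ⟨X, hX, hε⟩
    obtain ⟨i, rfl⟩ := mem_atomSet3_iff.1 (hS hX)
    rwa [(nil_mem_atom_iff i).1 hε] at hX
  · exact fun h => ⟨LC, h, nil_mem_LC⟩

lemma cons_mem_sSup_iff (hS : S ⊆ atomSet3) {x : Fin 2} {w : List (Fin 2)} :
    x :: w ∈ sSup S ↔ w ∈ sSup (alphaStepSet S x) := by
  constructor
  · rintro ⟨X, hX, hw⟩
    obtain ⟨i, rfl⟩ := mem_atomSet3_iff.1 (hS hX)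
    obtain ⟨j, hj, hw⟩ := (cons_mem_atom_iff i x w).1 hw
    exact ⟨atom j, Set.mem_biUnion hX (alphaStep_atom i x ▸ ⟨j, hj, rfl⟩), hw⟩
  · rintro ⟨Y, hY, hw⟩
    obtain ⟨X, hX, hY⟩ := Set.mem_iUnion₂.1 hY
    obtain ⟨i, rfl⟩ := mem_atomSet3_iff.1 (hS hX)
    obtain ⟨j, hj, rfl⟩ := alphaStep_atom i x ▸ hY
    exact ⟨atom i, hX, (cons_mem_atom_iff i x w).2 ⟨j, hj, hw⟩⟩

lemma subset_of_sSup_le_sSup (hS : S ⊆ atomSet3) (hT : T ⊆ atomSet3)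
    (h : sSup S ≤ sSup T) : S ⊆ T := by
  intro X hX
  obtain ⟨i, rfl⟩ := mem_atomSet3_iff.1 (hS hX)
  obtain ⟨w, hw⟩ := atom_nonempty i
  obtain ⟨Y, hY, hwY⟩ := h ⟨_, hX, hw⟩
  obtain ⟨j, rfl⟩ := mem_atomSet3_iff.1 (hT hY)
  rwa [eq_of_mem_atom hw hwY]

end SetsOfAtoms

namespace Legal3NFA

variable (N : Legal3NFA)

lemma start_eq : N.start = {{LA}} := by
  have hsub : N.start ⊆ {{LA}} := fun S hS =>
    (N.states_atoms S (N.start_sub hS)).1.subset_singleton_iff.1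
      (N.cond_init ▸ Set.subset_biUnion_of_mem (u := id) hS)
  have hne : N.start.Nonempty := by
    by_contra h
    have := N.cond_init
    simp [Set.not_nonempty_iff_eq_empty.1 h] at this
  exact hne.subset_singleton_iff.1 hsub

lemma singleton_LA_mem_states : {LA} ∈ N.states := N.start_sub (N.start_eq ▸ rfl)

lemma mem_accept_iff (N : Legal3NFA) {S : Set (Language (Fin 2))} :
    S ∈ N.accept ↔ S ∈ N.states ∧ LC ∈ S :=
  ⟨fun h => ⟨N.accept_sub h, (N.cond_fin S (N.accept_sub h)).1 h⟩,
    fun ⟨h, hC⟩ => (N.cond_fin S h).2 hC⟩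

lemma ext_of_step {N M : Legal3NFA} (hstates : N.states = M.states)
    (hstep : ∀ S ∈ N.states, N.step S = M.step S) : N = M := by
  have hstep' : N.step = M.step := by
    funext S x
    by_cases hS : S ∈ N.states
    · rw [hstep S hS]
    · rw [N.step_out S hS, M.step_out S (hstates ▸ hS)]
  have hstart : N.start = M.start := by rw [N.start_eq, M.start_eq]
  have haccept : N.accept = M.accept := by
    ext S
    rw [N.mem_accept_iff, M.mem_accept_iff, hstates]
  cases N
  cases M
  congr

lemma rightLang_toNFA (q : {S // S ∈ N.states}) : N.toNFA.rightLang q = sSup q.1 := by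
  ext w
  induction w generalizing q with
  | nil =>
    rw [NFA.nil_mem_rightLang, nil_mem_sSup_iff (N.states_atoms q.1 q.2).2]
    exact N.cond_fin q.1 q.2
  | cons x w ih =>
    rw [NFA.cons_mem_rightLang, cons_mem_sSup_iff (N.states_atoms q.1 q.2).2,
      ← N.cond_step q.1 q.2 x]
    simp only [ih, Language.mem_sSup, Set.mem_iUnion₂]
    constructor
    · rintro ⟨p, hp, X, hX, hw⟩
      exact ⟨X, ⟨p.1, hp, hX⟩, hw⟩
    · rintro ⟨X, ⟨T, hT, hX⟩, hw⟩
      exact ⟨⟨T, N.step_mem _ x hT⟩, hT, X, hX, hw⟩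

lemma accepts_toNFA : N.toNFA.accepts = LA := by
  ext w
  rw [NFA.mem_accepts_iff_exists_rightLang]
  constructor
  · rintro ⟨q, hq, hw⟩
    have hq : q.1 ∈ N.start := hq
    rw [N.start_eq, Set.mem_singleton_iff] at hq
    rwa [rightLang_toNFA, hq, sSup_singleton] at hw
  · intro hw
    refine ⟨⟨{LA}, N.singleton_LA_mem_states⟩, ?_, ?_⟩
    · show {LA} ∈ N.start
      rw [N.start_eq]
      rfl
    · rwa [rightLang_toNFA, sSup_singleton]

lemma isReduced_toNFA : N.toNFA.IsReduced := by
  intro q p h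
  rw [rightLang_toNFA, rightLang_toNFA] at h
  have hq := (N.states_atoms q.1 q.2).2
  have hp := (N.states_atoms p.1 p.2).2
  exact Subtype.ext ((subset_of_sSup_le_sSup hq hp h.le).antisymm
    (subset_of_sSup_le_sSup hp hq h.ge))

lemma isAtomic_toNFA : N.toNFA.IsAtomic := by
  intro q
  refine ⟨q.1, fun A hA => ?_, N.rightLang_toNFA q⟩
  rw [accepts_toNFA]
  exact ⟨(isAtomOf_LA_iff A).2 ((N.states_atoms q.1 q.2).2 hA), Set.univ, univ_mem_quots_LA,
    fun _ _ => trivial⟩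

end Legal3NFA

def atomsOf (s : Finset (Fin 3)) : Set (Language (Fin 2)) := atom '' s

lemma atomsOf_injective : Function.Injective atomsOf := fun _ _ h =>
  Finset.coe_injective (atom_injective.image_injective h)

lemma atomsOf_singleton_zero : atomsOf {0} = {LA} := by simp [atomsOf, atom]

lemma atomsOf_biUnion {ι : Type} (D : Finset ι) (f : ι → Finset (Fin 3)) :
    atomsOf (D.biUnion f) = ⋃ t ∈ D, atomsOf (f t) := by
  simp [atomsOf, Set.image_iUnion₂]

lemma alphaStepSet_atomsOf (s : Finset (Fin 3)) (x : Fin 2) :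
    alphaStepSet (atomsOf s) x = atomsOf (atomatonStepSet s x) := by
  simp [alphaStepSet, atomsOf, atomatonStepSet, alphaStep_atom, Set.image_iUnion₂]

lemma exists_image_atomsOf_eq {𝒮 : Set (Set (Language (Fin 2)))} (h : ∀ S ∈ 𝒮, S ⊆ atomSet3) :
    ∃ c : Finset (Finset (Fin 3)), atomsOf '' c = 𝒮 :=
  exists_finset_image_eq_of_subset_range fun S hS =>
    exists_finset_image_eq_of_subset_range (range_atom ▸ h S hS)

/-- `Legal3NFA`s in index form: a state is the index set of its atoms, `{0}` being `{A}`. -/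
abbrev Legal3Code :=
  Σ c : {c : Finset (Finset (Fin 3)) // c.card = 3 ∧ {0} ∈ c ∧ ∅ ∉ c},
    ∀ S : c.1, ∀ x : Fin 2, {D : Finset c.1 // D.sup Subtype.val = atomatonStepSet S x}

set_option maxRecDepth 10000 in
lemma card_legal3Code : Fintype.card Legal3Code = 281 := by decide

namespace Legal3Code

variable (e : Legal3Code)

def step (T : Set (Language (Fin 2))) (x : Fin 2) : Set (Set (Language (Fin 2))) :=
  {U | ∃ S : e.1.1, atomsOf S = T ∧ ∃ t ∈ (e.2 S x).1, atomsOf t = U}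

lemma step_atomsOf (S : e.1.1) (x : Fin 2) :
    e.step (atomsOf S) x = (fun t : e.1.1 => atomsOf t) '' (e.2 S x).1 := by
  ext U
  constructor
  · rintro ⟨S', hS', t, ht, rfl⟩
    obtain rfl : S' = S := Subtype.ext (atomsOf_injective hS')
    exact ⟨t, ht, rfl⟩
  · rintro ⟨t, ht, rfl⟩
    exact ⟨S, rfl, t, ht, rfl⟩

def toLegal3NFA : Legal3NFA where
  states := atomsOf '' e.1.1
  step := e.step
  start := {{LA}}
  accept := {S ∈ atomsOf '' e.1.1 | LC ∈ S}
  card_states := by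
    rw [Set.ncard_image_of_injective _ atomsOf_injective, Set.ncard_coe_finset, e.1.2.1]
  states_atoms := by
    rintro _ ⟨s, hs, rfl⟩
    refine ⟨?_, range_atom ▸ Set.image_subset_range _ _⟩
    simp only [atomsOf, Set.image_nonempty, Finset.coe_nonempty]
    exact Finset.nonempty_iff_ne_empty.2 fun h => e.1.2.2.2 (h ▸ hs)
  step_mem := by
    rintro T x _ ⟨S, -, t, -, rfl⟩
    exact ⟨t, t.2, rfl⟩
  step_out := by
    intro T hT x
    refine Set.eq_empty_of_forall_notMem ?_
    rintro _ ⟨S, rfl, -⟩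
    exact hT ⟨S, S.2, rfl⟩
  start_sub := by
    rintro _ rfl
    exact ⟨{0}, e.1.2.2.1, atomsOf_singleton_zero⟩
  accept_sub := fun _ h => h.1
  cond_init := by simp
  cond_step := by
    rintro _ ⟨s, hs, rfl⟩ x
    have hD := congrArg atomsOf (e.2 ⟨s, hs⟩ x).2
    rw [Finset.sup_eq_biUnion, atomsOf_biUnion] at hD
    rw [e.step_atomsOf ⟨s, hs⟩ x, Set.biUnion_image, alphaStepSet_atomsOf, ← hD]
    rfl
  cond_fin := fun _ hS => ⟨And.right, And.intro hS⟩

lemma toLegal3NFA_injective : Function.Injective toLegal3NFA := by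
  rintro ⟨c, D⟩ ⟨c', D'⟩ h
  obtain rfl : c = c' := Subtype.ext <| Finset.coe_injective <|
    atomsOf_injective.image_injective (congrArg Legal3NFA.states h)
  have hval : Function.Injective fun t : c.1 => atomsOf t :=
    atomsOf_injective.comp Subtype.val_injective
  obtain rfl : D = D' := funext₂ fun S x => Subtype.ext <| Finset.coe_injective <|
    hval.image_injective <| by
      have : step ⟨c, D⟩ (atomsOf S) x = step ⟨c, D'⟩ (atomsOf S) x :=
        congrFun (congrFun (congrArg Legal3NFA.step h) (atomsOf S)) x
      rwa [step_atomsOf, step_atomsOf] at this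
  rfl

lemma toLegal3NFA_surjective : Function.Surjective toLegal3NFA := by
  intro N
  obtain ⟨c, hc⟩ := exists_image_atomsOf_eq fun S hS => (N.states_atoms S hS).2
  have hcard : c.card = 3 := by
    have := N.card_states
    rwa [← hc, Set.ncard_image_of_injective _ atomsOf_injective, Set.ncard_coe_finset] at this
  have hLA : {0} ∈ c := by
    have := N.singleton_LA_mem_states
    rwa [← hc, ← atomsOf_singleton_zero, atomsOf_injective.mem_set_image] at this
  have hempty : ∅ ∉ c := fun h => by
    have := (N.states_atoms _ (hc ▸ Set.mem_image_of_mem atomsOf h)).1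
    simp [atomsOf] at this
  have hsteps : ∀ (S : c) (x : Fin 2), ∃ D : Finset c,
      (fun t : c => atomsOf t) '' D = N.step (atomsOf S) x := fun S x =>
    exists_finset_image_eq_of_subset_range fun T hT => by
      obtain ⟨t, ht, rfl⟩ := hc ▸ N.step_mem _ x hT
      exact ⟨⟨t, ht⟩, rfl⟩
  choose D hD using hsteps
  have hsup : ∀ S x, (D S x).sup Subtype.val = atomatonStepSet S x := fun S x => by
    apply atomsOf_injective
    rw [← alphaStepSet_atomsOf, ← N.cond_step _ (hc ▸ Set.mem_image_of_mem _ S.2), ← hD,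
      Set.biUnion_image, Finset.sup_eq_biUnion, atomsOf_biUnion]
    rfl
  refine ⟨⟨⟨c, hcard, hLA, hempty⟩, fun S x => ⟨D S x, hsup S x⟩⟩, ?_⟩
  refine Legal3NFA.ext_of_step hc ?_
  rintro _ ⟨s, hs, rfl⟩
  funext x
  exact (step_atomsOf _ ⟨s, hs⟩ x).trans (hD ⟨s, hs⟩ x)

end Legal3Code

theorem card_legal3NFA : Nat.card Legal3NFA = 281 := by
  rw [← Nat.card_eq_of_bijective _ ⟨Legal3Code.toLegal3NFA_injective,
    Legal3Code.toLegal3NFA_surjective⟩, Nat.card_eq_fintype_card, card_legal3Code]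

/-- The language `L = Σ*abΣ*` has exactly 281 minimal atomic NFAs: its atoms
are exactly `A = Σ*abΣ*`, `B = b*ba*`, `C = a*`; every atomic NFA accepting `L` has at least 3
states; there are exactly 281 three-state NFAs as in the Legality characterization; and each of
them is a reduced atomic NFA accepting `L`. -/
theorem lab_281_minimal_atomic_nfas :
    (∀ X : Language (Fin 2), IsAtomOf LA X ↔ X ∈ atomSet3) ∧
    (∀ (σ : Type) (_ : Finite σ) (M : NFA (Fin 2) σ), M.accepts = LA → M.IsAtomic →
      3 ≤ Nat.card σ) ∧
    Nat.card Legal3NFA = 281 ∧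
    (∀ N : Legal3NFA, N.toNFA.accepts = LA ∧ N.toNFA.IsReduced ∧ N.toNFA.IsAtomic) :=
  ⟨isAtomOf_LA_iff, fun _ _ M hM _ => three_le_card_of_accepts_eq_LA M hM, card_legal3NFA,
    fun N => ⟨N.accepts_toNFA, N.isReduced_toNFA, N.isAtomic_toNFA⟩⟩
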